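/- Fix b ∈ ℝ and s > 0. Then lim_{t → +∞} ∫₀^s ψ_{s+t}(y) dy = (|b|/√(2π)) · ∫₀^s e^{−b²y/2}/√y dy = 2Φ(|b|√s) − 1. (In particular the limit is 0 when b = 0 and is strictly positive when b ≠ 0.) -/

import Mathlib

open Real MeasureTheory Set Filter

/-- Standard Gaussian density φ(z) = (1/√(2π)) e^{−z²/2}. -/
noncomputable def gaussPdf (z : ℝ) : ℝ := (1 / Real.sqrt (2 * π)) * Real.exp (-z ^ 2 / 2)

/-- Standard Gaussian distribution function Φ(y) = ∫_{−∞}^y φ(z) dz. -/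
noncomputable def gaussCdf (y : ℝ) : ℝ := ∫ z in Set.Iio y, gaussPdf z

/-- ψ_t(u) = (e^{−b²u/2}/(π√(u(t−u)))) · [ e^{−b²(t−u)/2}
      + (b/2)·√(2π(t−u)) · (2Φ(b√(t−u)) − 1) ]. -/
noncomputable def psi (b t u : ℝ) : ℝ :=
  (Real.exp (-b ^ 2 * u / 2) / (π * Real.sqrt (u * (t - u)))) *
    (Real.exp (-b ^ 2 * (t - u) / 2) +
      (b / 2) * Real.sqrt (2 * π * (t - u)) *
        (2 * gaussCdf (b * Real.sqrt (t - u)) - 1))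

/-- Inverse Gaussian first-passage density f_{τ₁}(t) = (|a−x|/t^{3/2}) φ((a+bt−x)/√t). -/
noncomputable def invGaussPdf (a x b t : ℝ) : ℝ :=
  (|a - x| / t ^ ((3 : ℝ) / 2)) * gaussPdf ((a + b * t - x) / Real.sqrt t)

/-!
For `0 < y < t` we have `ψ_t(y) = e^{-b²y/2} / (π √y) · R(t - y)` with
`R(T) = e^{-b²T/2} / √T + (√(2π)/2) · b (2Φ(b√T) - 1)` (`psiTail`). By the symmetry
`Φ(-x) = 1 - Φ(x)`, `b (2Φ(bx) - 1) = |b| (2Φ(|b|x) - 1)`, so `R(T) → √(2π) |b| / 2`, and `R` is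
bounded on `[1, ∞)`; dominated convergence with majorant `C / √y` gives the limit
`(|b|/√(2π)) ∫₀^s e^{-b²y/2} / √y dy`. This integral is evaluated by the fundamental theorem of
calculus: `y ↦ 2Φ(|b|√y)` is continuous on `[0, s]`, has derivative
`(|b|/√(2π)) e^{-b²y/2} / √y` on `(0, s)`, and equals `1` at `0`.
-/

open ProbabilityTheory

lemma gaussPdf_eq_gaussianPDFReal : gaussPdf = gaussianPDFReal 0 1 := by
  ext z
  simp [gaussPdf, gaussianPDFReal, one_div]

lemma integrable_gaussPdf : Integrable gaussPdf := by
  rw [gaussPdf_eq_gaussianPDFReal]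
  exact integrable_gaussianPDFReal 0 1

lemma integral_gaussPdf : ∫ z, gaussPdf z = 1 := by
  rw [gaussPdf_eq_gaussianPDFReal]
  exact integral_gaussianPDFReal_eq_one 0 one_ne_zero

lemma continuous_gaussPdf : Continuous gaussPdf := by
  unfold gaussPdf
  fun_prop

lemma gaussPdf_nonneg (z : ℝ) : 0 ≤ gaussPdf z := by
  unfold gaussPdf
  positivity

lemma gaussPdf_neg (z : ℝ) : gaussPdf (-z) = gaussPdf z := by
  simp [gaussPdf]

lemma gaussCdf_eq_integral_Iic (y : ℝ) : gaussCdf y = ∫ z in Iic y, gaussPdf z :=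
  integral_Iic_eq_integral_Iio.symm

lemma gaussCdf_neg (y : ℝ) : gaussCdf (-y) = 1 - gaussCdf y := by
  have h : gaussCdf (-y) = ∫ z in Ioi y, gaussPdf z := by
    rw [gaussCdf_eq_integral_Iic, ← integral_comp_neg_Ioi]
    simp only [gaussPdf_neg]
  rw [h, gaussCdf_eq_integral_Iic, ← integral_gaussPdf,
    ← intervalIntegral.integral_Iic_add_Ioi integrable_gaussPdf.integrableOn
      integrable_gaussPdf.integrableOn]
  ring

lemma gaussCdf_zero : gaussCdf 0 = 1 / 2 := by
  have := gaussCdf_neg 0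
  rw [neg_zero] at this
  linarith

lemma gaussCdf_nonneg (y : ℝ) : 0 ≤ gaussCdf y :=
  setIntegral_nonneg measurableSet_Iio fun z _ => gaussPdf_nonneg z

lemma gaussCdf_le_one (y : ℝ) : gaussCdf y ≤ 1 := by
  linarith [gaussCdf_neg y, gaussCdf_nonneg (-y)]

lemma gaussCdf_eq_add_integral (y : ℝ) :
    gaussCdf y = gaussCdf 0 + ∫ z in (0 : ℝ)..y, gaussPdf z := by
  rw [gaussCdf_eq_integral_Iic, gaussCdf_eq_integral_Iic,
    ← intervalIntegral.integral_Iic_sub_Iic integrable_gaussPdf.integrableOn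
      integrable_gaussPdf.integrableOn]
  ring

lemma hasDerivAt_gaussCdf (y : ℝ) : HasDerivAt gaussCdf (gaussPdf y) y := by
  rw [funext gaussCdf_eq_add_integral]
  exact (intervalIntegral.integral_hasDerivAt_right integrable_gaussPdf.intervalIntegrable
    (continuous_gaussPdf.stronglyMeasurableAtFilter _ _)
    continuous_gaussPdf.continuousAt).const_add _

@[fun_prop]
lemma continuous_gaussCdf : Continuous gaussCdf :=
  continuous_iff_continuousAt.2 fun y => (hasDerivAt_gaussCdf y).continuousAt

lemma tendsto_gaussCdf_atTop : Tendsto gaussCdf atTop (nhds 1) := by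
  rw [← integral_gaussPdf]
  exact (aecover_Iio tendsto_id).integral_tendsto_of_countably_generated integrable_gaussPdf

lemma mul_two_mul_gaussCdf_mul_sub_one (b x : ℝ) :
    b * (2 * gaussCdf (b * x) - 1) = |b| * (2 * gaussCdf (|b| * x) - 1) := by
  rcases abs_choice b with hb | hb <;> rw [hb]
  rw [neg_mul b x, gaussCdf_neg]
  ring

lemma tendsto_mul_two_mul_gaussCdf_mul_sub_one (b : ℝ) :
    Tendsto (fun x => b * (2 * gaussCdf (b * x) - 1)) atTop (nhds |b|) := by
  simp only [mul_two_mul_gaussCdf_mul_sub_one b]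
  rcases (abs_nonneg b).eq_or_lt with hb | hb
  · simp [← hb]
  · have h := (tendsto_gaussCdf_atTop.comp (tendsto_id.const_mul_atTop hb)).const_mul 2
    convert (h.sub_const 1).const_mul |b| using 2 <;> norm_num

lemma intervalIntegrable_inv_sqrt {s : ℝ} (hs : 0 ≤ s) :
    IntervalIntegrable (fun y => (√y)⁻¹) volume 0 s := by
  refine intervalIntegral.intervalIntegrable_deriv_of_nonneg (g := fun y => 2 * √y)
    (by fun_prop) (fun y hy => ?_) (fun y _ => by positivity)
  have hy : 0 < y := by simpa [hs] using hy.1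
  exact ((hasDerivAt_sqrt hy.ne').const_mul 2).congr_deriv (by field_simp)

lemma intervalIntegrable_exp_div_sqrt (b : ℝ) {s : ℝ} (hs : 0 ≤ s) :
    IntervalIntegrable (fun y => exp (-b ^ 2 * y / 2) / √y) volume 0 s :=
  (intervalIntegrable_inv_sqrt hs).continuousOn_mul (g := fun y => exp (-b ^ 2 * y / 2))
    (by fun_prop)

lemma hasDerivAt_two_mul_gaussCdf_mul_sqrt (c : ℝ) {y : ℝ} (hy : 0 < y) :
    HasDerivAt (fun y => 2 * gaussCdf (c * √y))
      (c / √(2 * π) * (exp (-c ^ 2 * y / 2) / √y)) y := by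
  have h := ((hasDerivAt_gaussCdf _).comp y ((hasDerivAt_sqrt hy.ne').const_mul c)).const_mul 2
  refine h.congr_deriv ?_
  have hsq : (c * √y) ^ 2 = c ^ 2 * y := by rw [mul_pow, sq_sqrt hy.le]
  rw [gaussPdf, hsq]
  field_simp

lemma abs_mul_integral_exp_div_sqrt (b : ℝ) {s : ℝ} (hs : 0 ≤ s) :
    |b| / √(2 * π) * ∫ y in (0 : ℝ)..s, exp (-b ^ 2 * y / 2) / √y
      = 2 * gaussCdf (|b| * √s) - 1 := by
  rw [← intervalIntegral.integral_const_mul, ← sq_abs b,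
    intervalIntegral.integral_eq_sub_of_hasDerivAt_of_le hs (f := fun y => 2 * gaussCdf (|b| * √y))
      (by fun_prop) (fun y hy => hasDerivAt_two_mul_gaussCdf_mul_sqrt |b| hy.1)
      ((intervalIntegrable_exp_div_sqrt |b| hs).const_mul _)]
  simp [gaussCdf_zero]

lemma exp_neg_sq_mul_div_two_le_one (b : ℝ) {T : ℝ} (hT : 0 ≤ T) : exp (-b ^ 2 * T / 2) ≤ 1 :=
  exp_le_one_iff.2 (by nlinarith [sq_nonneg b])

noncomputable def psiTail (b T : ℝ) : ℝ :=
  exp (-b ^ 2 * T / 2) / √T + √(2 * π) / 2 * (b * (2 * gaussCdf (b * √T) - 1))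

lemma psi_eq_mul_psiTail {b t u : ℝ} (hu : 0 < u) (hut : u < t) :
    psi b t u = exp (-b ^ 2 * u / 2) / (π * √u) * psiTail b (t - u) := by
  have htu : 0 < t - u := sub_pos.2 hut
  have h1 : 0 < √u := sqrt_pos.2 hu
  have h2 : 0 < √(t - u) := sqrt_pos.2 htu
  rw [psi, psiTail, sqrt_mul hu.le, sqrt_mul (by positivity)]
  field_simp

lemma tendsto_psiTail (b : ℝ) : Tendsto (psiTail b) atTop (nhds (√(2 * π) / 2 * |b|)) := by
  have hexp : Tendsto (fun T => exp (-b ^ 2 * T / 2) / √T) atTop (nhds 0) := by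
    refine squeeze_zero' (Eventually.of_forall fun T => by positivity) ?_
      (tendsto_inv_atTop_zero.comp tendsto_sqrt_atTop)
    filter_upwards [eventually_ge_atTop 0] with T hT
    exact (div_le_div_of_nonneg_right (exp_neg_sq_mul_div_two_le_one b hT) (sqrt_nonneg T)).trans_eq
      (one_div _)
  have hgauss := ((tendsto_mul_two_mul_gaussCdf_mul_sub_one b).comp tendsto_sqrt_atTop).const_mul
    (√(2 * π) / 2)
  rw [← zero_add (√(2 * π) / 2 * |b|)]
  exact hexp.add hgauss

lemma abs_psiTail_le (b : ℝ) {T : ℝ} (hT : 1 ≤ T) : |psiTail b T| ≤ 1 + √(2 * π) / 2 * |b| := by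
  have hexp : |exp (-b ^ 2 * T / 2) / √T| ≤ 1 := by
    rw [abs_of_nonneg (by positivity)]
    exact (div_le_self (exp_nonneg _) (one_le_sqrt.2 hT)).trans
      (exp_neg_sq_mul_div_two_le_one b (by linarith))
  have hgauss : |2 * gaussCdf (b * √T) - 1| ≤ 1 :=
    abs_le.2 ⟨by linarith [gaussCdf_nonneg (b * √T)], by linarith [gaussCdf_le_one (b * √T)]⟩
  calc |psiTail b T|
      ≤ |exp (-b ^ 2 * T / 2) / √T| + |√(2 * π) / 2 * (b * (2 * gaussCdf (b * √T) - 1))| :=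
        abs_add_le _ _
    _ = |exp (-b ^ 2 * T / 2) / √T| + √(2 * π) / 2 * (|b| * |2 * gaussCdf (b * √T) - 1|) := by
        rw [abs_mul, abs_mul, abs_of_nonneg (by positivity : (0 : ℝ) ≤ √(2 * π) / 2)]
    _ ≤ 1 + √(2 * π) / 2 * (|b| * 1) := by gcongr
    _ = 1 + √(2 * π) / 2 * |b| := by rw [mul_one]

lemma tendsto_integral_psi (b : ℝ) {s : ℝ} (hs : 0 ≤ s) :
    Tendsto (fun t => ∫ y in (0 : ℝ)..s, psi b (s + t) y) atTop
      (nhds (∫ y in (0 : ℝ)..s, |b| / √(2 * π) * (exp (-b ^ 2 * y / 2) / √y))) := by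
  have hIoc : ∀ y ∈ uIoc 0 s, 0 < y ∧ y ≤ s := by simp [uIoc_of_le hs]
  refine intervalIntegral.tendsto_integral_filter_of_dominated_convergence
    (bound := fun y => (1 + √(2 * π) / 2 * |b|) / π * (√y)⁻¹)
    (Eventually.of_forall fun t => (by unfold psi; fun_prop : Measurable _).aestronglyMeasurable)
    ?_ ((intervalIntegrable_inv_sqrt hs).const_mul _) ?_
  · filter_upwards [eventually_ge_atTop 1] with t ht
    refine Eventually.of_forall fun y hy => ?_
    obtain ⟨hy0, hys⟩ := hIoc y hy
    have hfactor : ‖exp (-b ^ 2 * y / 2) / (π * √y)‖ ≤ (π * √y)⁻¹ := by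
      rw [norm_of_nonneg (by positivity), div_eq_mul_inv]
      exact mul_le_of_le_one_left (by positivity) (exp_neg_sq_mul_div_two_le_one b hy0.le)
    rw [psi_eq_mul_psiTail hy0 (by linarith), norm_mul]
    calc _ ≤ (π * √y)⁻¹ * (1 + √(2 * π) / 2 * |b|) :=
          mul_le_mul hfactor (abs_psiTail_le b (by linarith)) (abs_nonneg _) (by positivity)
      _ = _ := by rw [mul_inv]; ring
  · refine Eventually.of_forall fun y hy => ?_
    obtain ⟨hy0, hys⟩ := hIoc y hy
    have hT : Tendsto (fun t => s + t - y) atTop atTop :=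
      tendsto_atTop_add_const_right _ _ (tendsto_atTop_add_const_left _ s tendsto_id)
    have h := ((tendsto_psiTail b).comp hT).const_mul (exp (-b ^ 2 * y / 2) / (π * √y))
    have hlim : exp (-b ^ 2 * y / 2) / (π * √y) * (√(2 * π) / 2 * |b|)
        = |b| / √(2 * π) * (exp (-b ^ 2 * y / 2) / √y) := by
      have h2π : √(2 * π) ^ 2 = 2 * π := sq_sqrt (by positivity)
      field_simp
      rw [h2π]
    rw [hlim] at h
    refine h.congr' ?_
    filter_upwards [eventually_gt_atTop 0] with t ht
    exact (psi_eq_mul_psiTail hy0 (by linarith)).symm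

theorem stmt5 (b s : ℝ) (hs : 0 < s) :
    Filter.Tendsto (fun t => ∫ y in (0 : ℝ)..s, psi b (s + t) y) Filter.atTop
      (nhds (2 * gaussCdf (|b| * Real.sqrt s) - 1)) ∧
    (|b| / Real.sqrt (2 * π)) * (∫ y in (0 : ℝ)..s, Real.exp (-b ^ 2 * y / 2) / Real.sqrt y)
      = 2 * gaussCdf (|b| * Real.sqrt s) - 1 := by
  have hintegral := abs_mul_integral_exp_div_sqrt b hs.le
  refine ⟨?_, hintegral⟩
  have hlim := tendsto_integral_psi b hs.le
  rwa [intervalIntegral.integral_const_mul, hintegral] at hlim
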